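/- (Laplace approximation.) There exists a constant C > 0, depending only on d, σ and sup_{R∈[0,1]}|Ŵ'(R)|, with the following property. Let d ∈ {1,2,3}, let Ω = [0,l]^d with l > 0, let 0 < h ≤ 1, and let W be a radial smoothing kernel satisfying the decay condition. Let x_i ∈ Ω, let (x_j)_{j∈J} be a finite family of points of Ω with x_j ≠ x_i for all j, and let (v_j)_{j∈J} be nonnegative weights satisfying the regularity condition: for every multi-index α with 0 ≤ |α| ≤ 2 and every unit multi-index β, |∑_{j∈J} v_j (x_j − x_i)^α (∇W(x_i − x_j))^β − γ̄_{α,β}| ≤ h², where γ̄_{α,β} = 1 if α = β and γ̄_{α,β} = 0 otherwise. Then for every f ∈ C⁴(Ω), |2·∑_{j∈J} v_j (f(x_i) − f(x_j)) ((x_i − x_j)·∇W(x_i − x_j))/‖x_i − x_j‖² − Δf(x_i)| ≤ C·h²·‖f‖_{C⁴(Ω)}. -/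

import Mathlib

open scoped BigOperators RealInnerProductSpace
open Finset MeasureTheory

noncomputable section

/-- `ℝ^d` as Euclidean space. -/
abbrev Ed (d : ℕ) : Type := EuclideanSpace ℝ (Fin d)

/-- Value of the radial smoothing kernel `W(x) = (σ/h^d)·Ŵ(‖x‖/h)`,
with profile `P = Ŵ`. -/
def Wval (d : ℕ) (σ h : ℝ) (P : ℝ → ℝ) (x : Ed d) : ℝ :=
  (σ / h ^ d) * P (‖x‖ / h)

/-- Gradient of the radial smoothing kernel:
`∇W(x) = (σ/h^{d+1})·Ŵ'(‖x‖/h)·x/‖x‖` for `x ≠ 0`. -/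
def gradW (d : ℕ) (σ h : ℝ) (P : ℝ → ℝ) (x : Ed d) : Ed d :=
  ((σ / h ^ (d + 1)) * deriv P (‖x‖ / h) / ‖x‖) • x

/-- Multi-index power `v^α = v_1^{α_1}⋯v_d^{α_d}`. -/
def mpow {d : ℕ} (v : Ed d) (α : Fin d → ℕ) : ℝ := ∏ k, (v k) ^ (α k)

/-- Total degree `|α| = α_1 + ⋯ + α_d` of a multi-index. -/
def deg {d : ℕ} (α : Fin d → ℕ) : ℕ := ∑ k, α k

/-- Partial derivative along the `k`-th coordinate. -/
def pd {d : ℕ} (k : Fin d) (f : Ed d → ℝ) : Ed d → ℝ :=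
  fun x => fderiv ℝ f x (EuclideanSpace.single k 1)

/-- Mixed partial derivative `D^α f`. -/
def Dmix {d : ℕ} (α : Fin d → ℕ) (f : Ed d → ℝ) : Ed d → ℝ :=
  (List.finRange d).foldr (fun k g => (pd k)^[α k] g) f

/-- Laplacian `Δf = ∑_k ∂_k∂_k f`. -/
def lapl {d : ℕ} (f : Ed d → ℝ) : Ed d → ℝ := fun x => ∑ k, pd k (pd k f) x

/-- Variable coefficient elliptic operator `∇·(a∇f) = aΔf + ∇a·∇f`. -/
def ellip {d : ℕ} (a f : Ed d → ℝ) : Ed d → ℝ :=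
  fun x => a x * lapl f x + ∑ k, pd k a x * pd k f x

/-- The closed cube `Ω = [0,l]^d`. -/
def cube (d : ℕ) (l : ℝ) : Set (Ed d) := {x | ∀ k, x k ∈ Set.Icc 0 l}

/-- The `C^n(Ω)` norm: the max over multi-indices `α` with `|α| ≤ n` of
`sup_{x ∈ Ω} |D^α f x|`. -/
def Cnorm {d : ℕ} (n : ℕ) (f : Ed d → ℝ) (Ω : Set (Ed d)) : ℝ :=
  sSup {y : ℝ | ∃ α : Fin d → ℕ, deg α ≤ n ∧ ∃ x ∈ Ω, y = |Dmix α f x|}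

/-!
Write `∇W(x_i - x_j) = c_j (x_i - x_j)`. The decay condition gives `c_j ≤ 0`, the support of `Ŵ`
gives `c_j = 0` once `r_j = ‖x_i - x_j‖ > h`, and the sum becomes `∑ v_j (f(x_i) - f(x_j)) c_j`.
Expand `f(x_j)` to third order about `x_i`. After multiplication by `-c_j`, the Taylor term of
order `m` contracts `∂^m f(x_i)` against the moments `∑ v_j (x_j - x_i)^α (∇W)^β` with
`|α| = m - 1`, which the regularity condition pins to `δ_{αβ}` up to `h²`. So the terms of
orders one and three are `O(h²)`, and the term of order two is `Δf(x_i)/2 + O(h²)`. The fourth-order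
remainder is at most `C ‖f‖_{C⁴} r_j⁴ |c_j| ≤ C ‖f‖_{C⁴} h² r_j² |c_j|`, and
`∑ v_j r_j² |c_j|` is the trace of the first-order moment matrix, which is at most `d (1 + h²)`.
Mixed partials commute, so every partial derivative of order `≤ 4` is bounded by `‖f‖_{C⁴}`.
-/

section PartialDerivatives

variable {d : ℕ}

def iteratedPd (ks : List (Fin d)) (f : Ed d → ℝ) : Ed d → ℝ :=
  ks.foldr pd f

@[simp] lemma iteratedPd_nil (f : Ed d → ℝ) : iteratedPd [] f = f := rfl

@[simp] lemma iteratedPd_cons (k : Fin d) (ks : List (Fin d)) (f : Ed d → ℝ) :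
    iteratedPd (k :: ks) f = pd k (iteratedPd ks f) := rfl

lemma iteratedPd_append (ks ks' : List (Fin d)) (f : Ed d → ℝ) :
    iteratedPd (ks ++ ks') f = iteratedPd ks (iteratedPd ks' f) :=
  List.foldr_append

lemma iteratedPd_replicate (m : ℕ) (k : Fin d) (f : Ed d → ℝ) :
    iteratedPd (List.replicate m k) f = (pd k)^[m] f := by
  induction m with
  | zero => rfl
  | succ m ih => rw [List.replicate_succ, iteratedPd_cons, ih, Function.iterate_succ_apply']

lemma fderiv_apply_eq_sum_pd (f : Ed d → ℝ) (x u : Ed d) :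
    fderiv ℝ f x u = ∑ k, pd k f x * u k := by
  conv_lhs => rw [← (EuclideanSpace.basisFun (Fin d) ℝ).sum_repr u]
  simp [pd, mul_comm]

lemma contDiff_pd (k : Fin d) {f : Ed d → ℝ} {n : ℕ} (hf : ContDiff ℝ (n + 1) f) :
    ContDiff ℝ n (pd k f) :=
  (hf.fderiv_right le_rfl).clm_apply contDiff_const

lemma contDiff_iteratedPd (ks : List (Fin d)) {f : Ed d → ℝ} {n : ℕ}
    (hf : ContDiff ℝ (n + ks.length) f) : ContDiff ℝ n (iteratedPd ks f) := by
  induction ks generalizing n with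
  | nil => simpa using hf
  | cons k ks ih =>
    refine contDiff_pd k (ih ?_)
    simpa [add_assoc, add_comm (1 : WithTop ℕ∞)] using hf

lemma pd_comm (a b : Fin d) {f : Ed d → ℝ} (hf : ContDiff ℝ 2 f) :
    pd a (pd b f) = pd b (pd a f) := by
  ext x
  have hdf : Differentiable ℝ (fderiv ℝ f) := (hf.fderiv_right le_rfl).differentiable one_ne_zero
  have hsymm := hf.contDiffAt.isSymmSndFDerivAt (x := x) (by simp)
  change fderiv ℝ (fun y => fderiv ℝ f y _) x _ = fderiv ℝ (fun y => fderiv ℝ f y _) x _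
  rw [fderiv_clm_apply (hdf x) (differentiableAt_const _),
    fderiv_clm_apply (hdf x) (differentiableAt_const _)]
  simpa using hsymm (EuclideanSpace.single a 1) (EuclideanSpace.single b 1)

lemma iteratedPd_perm {f : Ed d → ℝ} {n : ℕ} (hf : ContDiff ℝ n f) {ks ks' : List (Fin d)}
    (hp : ks.Perm ks') (hlen : ks.length ≤ n) : iteratedPd ks f = iteratedPd ks' f := by
  induction hp with
  | nil => rfl
  | cons k _ ih => rw [iteratedPd_cons, iteratedPd_cons, ih (by simp at hlen; omega)]
  | swap a b ks =>
    refine pd_comm b a (contDiff_iteratedPd ks (hf.of_le ?_))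
    simp at hlen
    exact_mod_cast (by omega : 2 + ks.length ≤ n)
  | trans h₁ _ ih₁ ih₂ => rw [ih₁ hlen, ih₂ (h₁.length_eq ▸ hlen)]

end PartialDerivatives

section MultiIndices

variable {d : ℕ}

def indexList (α : Fin d → ℕ) : List (Fin d) :=
  (List.finRange d).flatMap fun k => List.replicate (α k) k

lemma Dmix_eq_iteratedPd (α : Fin d → ℕ) (f : Ed d → ℝ) :
    Dmix α f = iteratedPd (indexList α) f := by
  unfold Dmix indexList
  induction List.finRange d with
  | nil => rfl
  | cons k ks ih =>
    rw [List.foldr_cons, List.flatMap_cons, iteratedPd_append, iteratedPd_replicate, ih]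

lemma length_indexList (α : Fin d → ℕ) : (indexList α).length = deg α := by
  simp [indexList, deg, List.length_flatMap, Fin.sum_univ_def]

lemma count_indexList (α : Fin d → ℕ) (k : Fin d) : (indexList α).count k = α k := by
  simp [indexList, List.count_flatMap, List.count_replicate, Function.comp_def,
    ← Fin.sum_univ_def]

lemma indexList_count_perm (ks : List (Fin d)) : (indexList fun k => ks.count k).Perm ks :=
  List.perm_iff_count.mpr fun k => count_indexList _ k

lemma iteratedPd_eq_Dmix_count {f : Ed d → ℝ} {n : ℕ} (hf : ContDiff ℝ n f) {ks : List (Fin d)}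
    (hks : ks.length ≤ n) : iteratedPd ks f = Dmix (fun k => ks.count k) f := by
  rw [Dmix_eq_iteratedPd, iteratedPd_perm hf (indexList_count_perm ks).symm hks]

lemma deg_count (ks : List (Fin d)) : deg (fun k => ks.count k) = ks.length := by
  rw [← length_indexList, (indexList_count_perm ks).length_eq]

lemma continuous_Dmix {f : Ed d → ℝ} {n : ℕ} (hf : ContDiff ℝ n f) {α : Fin d → ℕ}
    (hα : deg α ≤ n) : Continuous (Dmix α f) := by
  rw [Dmix_eq_iteratedPd]
  refine (contDiff_iteratedPd (n := 0) _ (hf.of_le ?_)).continuous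
  rw [length_indexList]
  exact_mod_cast (by omega : 0 + deg α ≤ n)

lemma bddAbove_Cnorm_set {f : Ed d → ℝ} {n : ℕ} (hf : ContDiff ℝ n f) {Ω : Set (Ed d)}
    (hΩ : IsCompact Ω) :
    BddAbove {y : ℝ | ∃ α : Fin d → ℕ, deg α ≤ n ∧ ∃ x ∈ Ω, y = |Dmix α f x|} := by
  have hfin : {α : Fin d → ℕ | deg α ≤ n}.Finite :=
    (Set.Finite.pi fun _ => Set.finite_Iic n).subset fun α hα k _ =>
      (Finset.single_le_sum (fun _ _ => Nat.zero_le _) (Finset.mem_univ k)).trans hα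
  have hset : {y : ℝ | ∃ α : Fin d → ℕ, deg α ≤ n ∧ ∃ x ∈ Ω, y = |Dmix α f x|} =
      ⋃ α ∈ {α : Fin d → ℕ | deg α ≤ n}, (fun x => |Dmix α f x|) '' Ω := by
    ext y
    simp [eq_comm]
  rw [hset]
  exact hfin.bddAbove_biUnion.mpr fun α hα =>
    (hΩ.image (continuous_Dmix hf hα).abs).bddAbove

lemma abs_iteratedPd_le_Cnorm {f : Ed d → ℝ} {n : ℕ} (hf : ContDiff ℝ n f) {Ω : Set (Ed d)}
    (hΩ : IsCompact Ω) {ks : List (Fin d)} (hks : ks.length ≤ n) {y : Ed d} (hy : y ∈ Ω) :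
    |iteratedPd ks f y| ≤ Cnorm n f Ω := by
  rw [iteratedPd_eq_Dmix_count hf hks]
  exact le_csSup (bddAbove_Cnorm_set hf hΩ) ⟨_, (deg_count ks).trans_le hks, y, hy, rfl⟩

lemma mpow_zero (w : Ed d) : mpow w 0 = 1 := by simp [mpow]

lemma mpow_single (w : Ed d) (k : Fin d) : mpow w (Pi.single k 1) = w k := by
  simp [mpow, Pi.single_apply, pow_ite]

lemma mpow_single_add_single (w : Ed d) (a b : Fin d) :
    mpow w (Pi.single a 1 + Pi.single b 1) = w a * w b := by
  rw [← mpow_single w a, ← mpow_single w b]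
  simp only [mpow, Pi.add_apply, pow_add, Finset.prod_mul_distrib]

lemma deg_single (k : Fin d) : deg (Pi.single k 1 : Fin d → ℕ) = 1 := by
  simp [deg]

lemma deg_single_add_single (a b : Fin d) :
    deg (Pi.single a 1 + Pi.single b 1 : Fin d → ℕ) = 2 := by
  simp [deg, Finset.sum_add_distrib]

end MultiIndices

lemma abs_sum_le_card_mul {ι : Type*} [Fintype ι] {F : ι → ℝ} {b : ℝ} (hF : ∀ i, |F i| ≤ b) :
    |∑ i, F i| ≤ Fintype.card ι * b :=
  (Finset.abs_sum_le_sum_abs _ _).trans <| by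
    simpa using Finset.sum_le_card_nsmul Finset.univ _ b fun i _ => hF i

lemma abs_sub_taylor_le {g : ℝ → ℝ} {n : ℕ} (hg : ContDiff ℝ (n + 1) g) {K : ℝ}
    (hK : ∀ t ∈ Set.Icc (0 : ℝ) 1, |iteratedDeriv (n + 1) g t| ≤ K) :
    |g 1 - ∑ m ∈ range (n + 1), iteratedDeriv m g 0 / m.factorial| ≤ K / (n + 1).factorial := by
  obtain ⟨t, ht, hrem⟩ :=
    taylor_mean_remainder_lagrange_iteratedDeriv (x₀ := 0) (x := 1) zero_ne_one hg.contDiffOn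
  rw [Set.uIoo_of_le zero_le_one] at ht
  rw [Set.uIcc_of_le zero_le_one] at hrem
  have htaylor : taylorWithinEval g n (Set.Icc 0 1) 0 1 =
      ∑ m ∈ range (n + 1), iteratedDeriv m g 0 / m.factorial := by
    rw [taylor_within_apply]
    refine Finset.sum_congr rfl fun m hm => ?_
    rw [iteratedDerivWithin_eq_iteratedDeriv (uniqueDiffOn_Icc zero_lt_one)
      (hg.contDiffAt.of_le (by norm_cast; simp at hm; omega)) ⟨le_rfl, zero_le_one⟩]
    simp [div_eq_inv_mul]
  rw [← htaylor, hrem, sub_zero, one_pow, mul_one, abs_div, Nat.abs_cast]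
  gcongr
  exact hK t (Set.Ioo_subset_Icc_self ht)

section DirectionalDerivatives

variable {d : ℕ}

/-- `iterDirDeriv u m F y = d^m F(y)[u, …, u]`, written out in coordinate partial
derivatives. -/
def iterDirDeriv (u : Ed d) : ℕ → (Ed d → ℝ) → Ed d → ℝ
  | 0, F => F
  | m + 1, F => fun y => ∑ k, iterDirDeriv u m (pd k F) y * u k

lemma hasDerivAt_iterDirDeriv_line {m : ℕ} {F : Ed d → ℝ} (hF : ContDiff ℝ (m + 1) F)
    (x u : Ed d) (t : ℝ) :
    HasDerivAt (fun s => iterDirDeriv u m F (x + s • u))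
      (iterDirDeriv u (m + 1) F (x + t • u)) t := by
  induction m generalizing F with
  | zero =>
    have hline : HasDerivAt (fun s : ℝ => x + s • u) u t := by
      simpa using ((hasDerivAt_id t).smul_const u).const_add x
    have := ((hF.differentiable one_ne_zero) _).hasFDerivAt.comp_hasDerivAt t hline
    rw [fderiv_apply_eq_sum_pd] at this
    exact this
  | succ m ih =>
    exact HasDerivAt.fun_sum fun k _ =>
      (ih (contDiff_pd k (by simpa using hF))).mul_const (u k)

lemma iteratedDeriv_comp_line {n m : ℕ} {F : Ed d → ℝ} (hF : ContDiff ℝ n F) (hm : m ≤ n)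
    (x u : Ed d) :
    iteratedDeriv m (fun s : ℝ => F (x + s • u)) = fun t => iterDirDeriv u m F (x + t • u) := by
  induction m with
  | zero => rfl
  | succ m ih =>
    ext t
    rw [iteratedDeriv_succ, ih (by omega)]
    exact (hasDerivAt_iterDirDeriv_line (hF.of_le (by exact_mod_cast hm)) x u t).deriv

lemma abs_iterDirDeriv_le {m : ℕ} {F : Ed d → ℝ} {u y : Ed d} {B : ℝ}
    (hB : ∀ ks : List (Fin d), ks.length = m → |iteratedPd ks F y| ≤ B) :
    |iterDirDeriv u m F y| ≤ (d * ‖u‖) ^ m * B := by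
  induction m generalizing F with
  | zero => simpa [iterDirDeriv] using hB [] rfl
  | succ m ih =>
    have hk (k : Fin d) : |iterDirDeriv u m (pd k F) y| ≤ (d * ‖u‖) ^ m * B :=
      ih fun ks hks => by simpa [iteratedPd_append] using hB (ks ++ [k]) (by simp [hks])
    calc |iterDirDeriv u (m + 1) F y|
        ≤ d * ((d * ‖u‖) ^ m * B * ‖u‖) := by
          refine (abs_sum_le_card_mul (b := (d * ‖u‖) ^ m * B * ‖u‖) fun k => ?_).trans_eq
            (by simp)
          rw [abs_mul]
          exact mul_le_mul (hk k) (by simpa using PiLp.norm_apply_le u k) (abs_nonneg _)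
            ((abs_nonneg _).trans (hk k))
      _ = (d * ‖u‖) ^ (m + 1) * B := by ring

lemma mul_iterDirDeriv_succ (a : ℝ) (u : Ed d) (m : ℕ) (F : Ed d → ℝ) (z : Ed d) :
    a * iterDirDeriv u (m + 1) F z = ∑ k, iterDirDeriv u m (pd k F) z * (a • u) k := by
  simp only [iterDirDeriv, Finset.mul_sum, PiLp.smul_apply, smul_eq_mul]
  exact Finset.sum_congr rfl fun _ _ => by ring

lemma abs_sub_taylor_iterDirDeriv_le {n : ℕ} {F : Ed d → ℝ} (hF : ContDiff ℝ (n + 1) F)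
    {Ω : Set (Ed d)} (hΩ : Convex ℝ Ω) {x y : Ed d} (hx : x ∈ Ω) (hy : y ∈ Ω) {M : ℝ}
    (hM : ∀ ks : List (Fin d), ks.length = n + 1 → ∀ z ∈ Ω, |iteratedPd ks F z| ≤ M) :
    |F y - ∑ m ∈ range (n + 1), iterDirDeriv (y - x) m F x / m.factorial|
      ≤ d ^ (n + 1) * M / (n + 1).factorial * ‖y - x‖ ^ (n + 1) := by
  have hline : ContDiff ℝ (n + 1) fun s : ℝ => F (x + s • (y - x)) :=
    hF.comp (contDiff_const.add (contDiff_id.smul contDiff_const))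
  have h := abs_sub_taylor_le hline fun t ht => by
    rw [iteratedDeriv_comp_line hF le_rfl]
    exact abs_iterDirDeriv_le fun ks hks => hM ks hks _ (hΩ.add_smul_sub_mem hx hy ht)
  have hcoeff : ∀ m ∈ range (n + 1),
      iteratedDeriv m (fun s : ℝ => F (x + s • (y - x))) 0 = iterDirDeriv (y - x) m F x :=
    fun m hm => by
      rw [iteratedDeriv_comp_line (n := n + 1) (by exact_mod_cast hF) (by simp at hm; omega)]
      simp
  rw [Finset.sum_congr rfl fun m hm => by rw [hcoeff m hm]] at h
  convert h using 1
  · simp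
  · ring

end DirectionalDerivatives

/-- The regularity condition for `|α| = 0, 1, 2`, written in coordinates: `y j = x_j - x_i`,
`g j = ∇W(x_i - x_j)` and `β = e_k`. -/
structure MomentBounds {ι : Type*} [Fintype ι] {d : ℕ} (v : ι → ℝ) (y g : ι → Ed d) (ε : ℝ) :
    Prop where
  zero : ∀ k, |∑ j, v j * g j k| ≤ ε
  one : ∀ a k, |∑ j, v j * y j a * g j k - if a = k then 1 else 0| ≤ ε
  two : ∀ a b k, |∑ j, v j * (y j a * y j b) * g j k| ≤ ε

section MomentBounds

variable {ι : Type*} [Fintype ι] {d : ℕ} {v : ι → ℝ} {y g : ι → Ed d} {ε A : ℝ}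

lemma MomentBounds.of_mpow
    (hreg : ∀ α : Fin d → ℕ, deg α ≤ 2 → ∀ β : Fin d → ℕ, deg β = 1 →
      |∑ j, v j * mpow (y j) α * mpow (g j) β - if α = β then 1 else 0| ≤ ε) :
    MomentBounds v y g ε where
  zero k := by
    have hne : (0 : Fin d → ℕ) ≠ Pi.single k 1 := fun h => by
      simpa [deg] using congrArg deg h
    simpa [mpow_zero, mpow_single, hne] using hreg 0 (by simp [deg]) _ (deg_single k)
  one a k := by
    have hif : (if (Pi.single a 1 : Fin d → ℕ) = Pi.single k 1 then (1 : ℝ) else 0) =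
        if a = k then 1 else 0 := by
      by_cases hak : a = k
      · simp [hak]
      · have hne : (Pi.single a 1 : Fin d → ℕ) ≠ Pi.single k 1 := fun h => by
          simpa [hak] using congrFun h a
        simp [hak, hne]
    simpa [mpow_single, hif] using hreg _ ((deg_single a).trans_le one_le_two) _ (deg_single k)
  two a b k := by
    have hne : (Pi.single a 1 + Pi.single b 1 : Fin d → ℕ) ≠ Pi.single k 1 := fun h => by
      simpa [deg_single_add_single, deg_single] using congrArg deg h
    simpa [mpow_single, mpow_single_add_single, hne] using
      hreg _ (deg_single_add_single a b).le _ (deg_single k)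

lemma MomentBounds.abs_sum_first (hm : MomentBounds v y g ε) {c : Fin d → ℝ}
    (hc : ∀ k, |c k| ≤ A) :
    |∑ j, v j * ∑ k, c k * g j k| ≤ d * (A * ε) := by
  have hswap : ∑ j, v j * ∑ k, c k * g j k = ∑ k, c k * ∑ j, v j * g j k := by
    simp only [Finset.mul_sum]
    rw [Finset.sum_comm]
    exact Finset.sum_congr rfl fun _ _ => Finset.sum_congr rfl fun _ _ => by ring
  rw [hswap]
  refine (abs_sum_le_card_mul (b := A * ε) fun k => ?_).trans_eq (by simp)
  rw [abs_mul]
  exact mul_le_mul (hc k) (hm.zero k) (abs_nonneg _) ((abs_nonneg _).trans (hc k))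

lemma MomentBounds.abs_sum_second_sub (hm : MomentBounds v y g ε) {c : Fin d → Fin d → ℝ}
    (hc : ∀ k a, |c k a| ≤ A) :
    |∑ j, v j * ∑ k, (∑ a, c k a * y j a) * g j k - ∑ k, c k k| ≤ d * (d * (A * ε)) := by
  have hswap : ∑ j, v j * ∑ k, (∑ a, c k a * y j a) * g j k - ∑ k, c k k =
      ∑ k, ∑ a, c k a * (∑ j, v j * y j a * g j k - if a = k then 1 else 0) := by
    simp only [mul_sub, Finset.sum_sub_distrib, mul_ite, mul_one, mul_zero,
      Finset.sum_ite_eq', Finset.mem_univ, if_true, Finset.mul_sum, Finset.sum_mul]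
    rw [Finset.sum_comm]
    congr 1
    refine Finset.sum_congr rfl fun k _ => ?_
    rw [Finset.sum_comm]
    exact Finset.sum_congr rfl fun _ _ => Finset.sum_congr rfl fun _ _ => by ring
  rw [hswap]
  refine (abs_sum_le_card_mul (b := d * (A * ε)) fun k => ?_).trans_eq (by simp)
  refine (abs_sum_le_card_mul (b := A * ε) fun a => ?_).trans_eq (by simp)
  rw [abs_mul]
  exact mul_le_mul (hc k a) (hm.one a k) (abs_nonneg _) ((abs_nonneg _).trans (hc k a))

lemma MomentBounds.abs_sum_third (hm : MomentBounds v y g ε)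
    {c : Fin d → Fin d → Fin d → ℝ} (hc : ∀ k a b, |c k a b| ≤ A) :
    |∑ j, v j * ∑ k, (∑ a, (∑ b, c k a b * y j b) * y j a) * g j k|
      ≤ d * (d * (d * (A * ε))) := by
  have hswap : ∑ j, v j * ∑ k, (∑ a, (∑ b, c k a b * y j b) * y j a) * g j k =
      ∑ k, ∑ a, ∑ b, c k a b * ∑ j, v j * (y j b * y j a) * g j k := by
    simp only [Finset.mul_sum, Finset.sum_mul]
    rw [Finset.sum_comm]
    refine Finset.sum_congr rfl fun k _ => ?_
    rw [Finset.sum_comm]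
    refine Finset.sum_congr rfl fun a _ => ?_
    rw [Finset.sum_comm]
    exact Finset.sum_congr rfl fun _ _ => Finset.sum_congr rfl fun _ _ => by ring
  rw [hswap]
  refine (abs_sum_le_card_mul (b := d * (d * (A * ε))) fun k => ?_).trans_eq (by simp)
  refine (abs_sum_le_card_mul (b := d * (A * ε)) fun a => ?_).trans_eq (by simp)
  refine (abs_sum_le_card_mul (b := A * ε) fun b => ?_).trans_eq (by simp)
  rw [abs_mul]
  exact mul_le_mul (hc k a b) (hm.two b a k) (abs_nonneg _) ((abs_nonneg _).trans (hc k a b))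

end MomentBounds

lemma MomentBounds.abs_sum_remainder_le {ι : Type*} [Fintype ι] {d : ℕ} {v w : ι → ℝ}
    {y g : ι → Ed d} {ε h K : ℝ} {R : ι → ℝ} (hm : MomentBounds v y g ε) (hv : ∀ j, 0 ≤ v j)
    (hw : ∀ j, 0 ≤ w j) (hg : ∀ j, g j = w j • y j) (hsupp : ∀ j, h < ‖y j‖ → w j = 0)
    (hK : 0 ≤ K) (hR : ∀ j, |R j| ≤ K * ‖y j‖ ^ 4) :
    |∑ j, v j * w j * R j| ≤ K * h ^ 2 * (d * (1 + ε)) := by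
  have hsecond (j : ι) : w j * ‖y j‖ ^ 2 = ∑ k, y j k * g j k := by
    simp only [hg, EuclideanSpace.real_norm_sq_eq, Finset.mul_sum, PiLp.smul_apply, smul_eq_mul]
    exact Finset.sum_congr rfl fun _ _ => by ring
  have hlocal (j : ι) : w j * ‖y j‖ ^ 4 ≤ h ^ 2 * (w j * ‖y j‖ ^ 2) := by
    rcases le_or_gt ‖y j‖ h with hle | hlt
    · have : ‖y j‖ ^ 2 ≤ h ^ 2 := pow_le_pow_left₀ (norm_nonneg _) hle 2
      nlinarith [mul_le_mul_of_nonneg_left this (mul_nonneg (hw j) (sq_nonneg ‖y j‖))]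
    · simp [hsupp j hlt]
  calc |∑ j, v j * w j * R j|
      ≤ ∑ j, v j * w j * (K * ‖y j‖ ^ 4) := by
        refine (Finset.abs_sum_le_sum_abs _ _).trans (Finset.sum_le_sum fun j _ => ?_)
        rw [abs_mul, abs_of_nonneg (mul_nonneg (hv j) (hw j))]
        exact mul_le_mul_of_nonneg_left (hR j) (mul_nonneg (hv j) (hw j))
    _ ≤ ∑ j, K * h ^ 2 * (v j * (w j * ‖y j‖ ^ 2)) := by
        refine Finset.sum_le_sum fun j _ => ?_
        nlinarith [mul_le_mul_of_nonneg_left (hlocal j) (mul_nonneg hK (hv j))]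
    _ = K * h ^ 2 * ∑ k, ∑ j, v j * y j k * g j k := by
        simp only [hsecond, Finset.mul_sum]
        rw [Finset.sum_comm]
        exact Finset.sum_congr rfl fun _ _ => Finset.sum_congr rfl fun _ _ => by ring
    _ ≤ K * h ^ 2 * (d * (1 + ε)) := by
        refine mul_le_mul_of_nonneg_left ?_ (mul_nonneg hK (sq_nonneg h))
        refine (Finset.sum_le_sum (g := fun _ => 1 + ε) fun k _ => ?_).trans_eq (by simp [mul_add])
        have := hm.one k k
        rw [if_pos rfl] at this
        linarith [(abs_le.mp this).2]

lemma abs_two_mul_add_le_of_bounds {d M h e₀ e₁ e₂ r : ℝ} (hd : 0 ≤ d) (hM : 0 ≤ M)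
    (hh : h ^ 2 ≤ 1) (h₀ : |e₀| ≤ d * (M * h ^ 2)) (h₁ : |e₁| ≤ d * (d * (M * h ^ 2)))
    (h₂ : |e₂| ≤ d * (d * (d * (M * h ^ 2))))
    (hr : |r| ≤ d ^ 4 * M / 24 * h ^ 2 * (d * (1 + h ^ 2))) :
    |2 * e₀ + e₁ + e₂ / 3 + 2 * r| ≤ (d + 1) ^ 5 * h ^ 2 * M := by
  have hMh : 0 ≤ M * h ^ 2 := mul_nonneg hM (sq_nonneg h)
  have hr' : |r| ≤ d ^ 5 / 12 * (M * h ^ 2) := by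
    refine hr.trans ?_
    nlinarith [mul_nonneg (pow_nonneg hd 5) hMh]
  calc |2 * e₀ + e₁ + e₂ / 3 + 2 * r|
      ≤ 2 * |e₀| + |e₁| + |e₂| / 3 + 2 * |r| := by
        have := (abs_add_le (2 * e₀ + e₁ + e₂ / 3) (2 * r)).trans
          (add_le_add_left (abs_add_three (2 * e₀) e₁ (e₂ / 3)) _)
        simpa only [abs_mul, abs_div, Nat.abs_ofNat] using this
    _ ≤ (2 * d + d ^ 2 + d ^ 3 / 3 + d ^ 5 / 6) * (M * h ^ 2) := by nlinarith
    _ ≤ (d + 1) ^ 5 * h ^ 2 * M := by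
        nlinarith [mul_nonneg (pow_nonneg hd 2) hMh, mul_nonneg (pow_nonneg hd 3) hMh,
          mul_nonneg (pow_nonneg hd 4) hMh, mul_nonneg (pow_nonneg hd 5) hMh,
          mul_nonneg hd hMh]

theorem abs_two_mul_sum_sub_lapl_le {ι : Type*} [Fintype ι] {d : ℕ} {f : Ed d → ℝ}
    (hf : ContDiff ℝ 4 f) {Ω : Set (Ed d)} (hΩ : Convex ℝ Ω) {M : ℝ}
    (hM : ∀ ks : List (Fin d), ks.length ≤ 4 → ∀ z ∈ Ω, |iteratedPd ks f z| ≤ M)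
    {xi : Ed d} (hxi : xi ∈ Ω) {x : ι → Ed d} (hx : ∀ j, x j ∈ Ω) {v c : ι → ℝ}
    {g : ι → Ed d} {h : ℝ} (hv : ∀ j, 0 ≤ v j) (hc : ∀ j, c j ≤ 0)
    (hg : ∀ j, g j = c j • (xi - x j)) (hsupp : ∀ j, h < ‖xi - x j‖ → c j = 0)
    (hm : MomentBounds v (fun j => x j - xi) g (h ^ 2)) (hh : h ^ 2 ≤ 1) :
    |2 * ∑ j, v j * (f xi - f (x j)) * c j - lapl f xi| ≤ (d + 1) ^ 5 * h ^ 2 * M := by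
  have hM0 : 0 ≤ M := (abs_nonneg _).trans (hM [] (by simp) xi hxi)
  set R : ι → ℝ := fun j =>
    f (x j) - ∑ m ∈ range 4, iterDirDeriv (x j - xi) m f xi / m.factorial
  set E : ℕ → ℝ := fun m => ∑ j, v j * ∑ k, iterDirDeriv (x j - xi) m (pd k f) xi * g j k
  have hg' (j : ι) : g j = -c j • (x j - xi) := by rw [hg, ← neg_sub, smul_neg, neg_smul]
  have hsplit : 2 * ∑ j, v j * (f xi - f (x j)) * c j - lapl f xi =
      2 * E 0 + (E 1 - lapl f xi) + E 2 / 3 + 2 * ∑ j, v j * -c j * R j := by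
    have hj (j : ι) : v j * (f xi - f (x j)) * c j =
        v j * (-c j * iterDirDeriv (x j - xi) 1 f xi) +
          v j * (-c j * iterDirDeriv (x j - xi) 2 f xi) / 2 +
          v j * (-c j * iterDirDeriv (x j - xi) 3 f xi) / 6 + v j * -c j * R j := by
      simp only [R, Finset.sum_range_succ, Finset.sum_range_zero, Nat.factorial]
      push_cast
      rw [iterDirDeriv]
      ring
    simp only [hj, mul_iterDirDeriv_succ, ← hg', Finset.sum_add_distrib, ← Finset.sum_div, E]
    ring
  have hE0 : |E 0| ≤ d * (M * h ^ 2) :=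
    hm.abs_sum_first fun k => hM [k] (by simp) xi hxi
  have hE1 : |E 1 - lapl f xi| ≤ d * (d * (M * h ^ 2)) :=
    hm.abs_sum_second_sub (c := fun k a => pd a (pd k f) xi) fun k a =>
      hM [a, k] (by simp) xi hxi
  have hE2 : |E 2| ≤ d * (d * (d * (M * h ^ 2))) :=
    hm.abs_sum_third (c := fun k a b => pd b (pd a (pd k f)) xi) fun k a b =>
      hM [b, a, k] (by simp) xi hxi
  have hR : |∑ j, v j * -c j * R j| ≤ d ^ 4 * M / 24 * h ^ 2 * (d * (1 + h ^ 2)) := by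
    refine hm.abs_sum_remainder_le hv (fun j => neg_nonneg.mpr (hc j)) hg'
      (fun j hj => neg_eq_zero.mpr (hsupp j (by rwa [norm_sub_rev]))) (by positivity)
      fun j => by
        simpa [Nat.factorial] using abs_sub_taylor_iterDirDeriv_le (n := 3) hf hΩ hxi (hx j)
          fun ks hks => hM ks hks.le
  rw [hsplit]
  exact abs_two_mul_add_le_of_bounds d.cast_nonneg hM0 hh hE0 hE1 hE2 hR

section Kernel

variable {d : ℕ} {σ h : ℝ} {P : ℝ → ℝ}

def gradWCoeff (d : ℕ) (σ h : ℝ) (P : ℝ → ℝ) (x : Ed d) : ℝ :=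
  σ / h ^ (d + 1) * deriv P (‖x‖ / h) / ‖x‖

lemma gradW_eq_smul (x : Ed d) : gradW d σ h P x = gradWCoeff d σ h P x • x := rfl

lemma gradWCoeff_nonpos (hσ : 0 ≤ σ) (hh : 0 ≤ h) (hdec : ∀ R : ℝ, 0 ≤ R → deriv P R ≤ 0)
    (x : Ed d) : gradWCoeff d σ h P x ≤ 0 :=
  div_nonpos_of_nonpos_of_nonneg
    (mul_nonpos_of_nonneg_of_nonpos (by positivity) (hdec _ (by positivity))) (norm_nonneg x)

lemma gradWCoeff_eq_zero (hPsupp : ∀ R : ℝ, 1 ≤ R → P R = 0) (hh : 0 < h) {x : Ed d}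
    (hx : h < ‖x‖) : gradWCoeff d σ h P x = 0 := by
  have hR : 1 < ‖x‖ / h := (one_lt_div hh).mpr hx
  have hP0 : P =ᶠ[nhds (‖x‖ / h)] fun _ => 0 :=
    Filter.eventuallyEq_of_mem (Ioi_mem_nhds hR) fun R hR => hPsupp R (le_of_lt hR)
  simp [gradWCoeff, hP0.deriv_eq]

lemma inner_gradW_div_norm_sq {x : Ed d} (hx : x ≠ 0) :
    ⟪x, gradW d σ h P x⟫ / ‖x‖ ^ 2 = gradWCoeff d σ h P x := by
  rw [gradW_eq_smul, real_inner_smul_right, real_inner_self_eq_norm_sq,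
    mul_div_cancel_right₀ _ (pow_ne_zero 2 (norm_ne_zero_iff.mpr hx))]

end Kernel

lemma isCompact_cube (d : ℕ) (l : ℝ) : IsCompact (cube d l) := by
  have : cube d l = WithLp.toLp 2 '' Set.univ.pi fun _ => Set.Icc 0 l := by
    ext x
    exact ⟨fun hx => ⟨x.ofLp, fun k _ => hx k, rfl⟩, by rintro ⟨y, hy, rfl⟩ k; exact hy k trivial⟩
  rw [this]
  exact (isCompact_univ_pi fun _ => isCompact_Icc).image (PiLp.continuous_toLp 2 _)

lemma convex_cube (d : ℕ) (l : ℝ) : Convex ℝ (cube d l) := by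
  have : cube d l = ⋂ k, (EuclideanSpace.proj k : Ed d →L[ℝ] ℝ) ⁻¹' Set.Icc 0 l := by
    ext x
    simp [cube]
  rw [this]
  exact convex_iInter fun k => (convex_Icc 0 l).linear_preimage _

theorem stmt_4_general
    (d : ℕ) (σ : ℝ) (hσ : 0 < σ)
    (P : ℝ → ℝ)
    (hPsupp : ∀ R : ℝ, 1 ≤ R → P R = 0)
    (hdec : ∀ R : ℝ, 0 ≤ R → deriv P R ≤ 0) :
    ∃ C > 0, ∀ (l : ℝ), 0 < l → ∀ (h : ℝ), 0 < h → h ≤ 1 →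
      ∀ (xi : Ed d), xi ∈ cube d l →
      ∀ (n : ℕ) (x : Fin n → Ed d) (v : Fin n → ℝ),
        (∀ j, x j ∈ cube d l) →
        (∀ j, x j ≠ xi) →
        (∀ j, 0 ≤ v j) →
        (∀ α : Fin d → ℕ, deg α ≤ 2 →
          ∀ β : Fin d → ℕ, deg β = 1 →
            |∑ j, v j * mpow (x j - xi) α * mpow (gradW d σ h P (xi - x j)) β
              - (if α = β then (1 : ℝ) else 0)| ≤ h ^ 2) →
        ∀ f : Ed d → ℝ, ContDiff ℝ 4 f →
          |2 * ∑ j, v j * (f xi - f (x j)) *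
              (⟪xi - x j, gradW d σ h P (xi - x j)⟫ / ‖xi - x j‖ ^ 2)
            - lapl f xi| ≤ C * h ^ 2 * Cnorm 4 f (cube d l) := by
  refine ⟨((d : ℝ) + 1) ^ 5, by positivity, ?_⟩
  intro l _ h hh0 hh1 xi hxi n x v hx hxne hv hreg f hf
  simp only [fun j => inner_gradW_div_norm_sq (σ := σ) (h := h) (P := P)
    (sub_ne_zero.mpr (hxne j).symm)]
  exact abs_two_mul_sum_sub_lapl_le hf (convex_cube d l)
    (fun ks hks z hz => abs_iteratedPd_le_Cnorm hf (isCompact_cube d l) hks hz) hxi hx hv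
    (fun _ => gradWCoeff_nonpos hσ.le hh0.le hdec _) (fun _ => gradW_eq_smul _)
    (fun _ hj => gradWCoeff_eq_zero hPsupp hh0 hj) (MomentBounds.of_mpow hreg)
    (pow_le_one₀ hh0.le hh1)

/-- Laplace approximation: second-order accuracy of the SPH
Laplacian approximation under the regularity conditions. -/
theorem stmt_4
    (d : ℕ) (hd : d = 1 ∨ d = 2 ∨ d = 3) (σ : ℝ) (hσ : 0 < σ)
    (P : ℝ → ℝ) (hP : ContDiff ℝ 1 P)
    (hPnn : ∀ R : ℝ, 0 ≤ R → 0 ≤ P R)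
    (hPsupp : ∀ R : ℝ, 1 ≤ R → P R = 0)
    (hdec : ∀ R : ℝ, 0 ≤ R → deriv P R ≤ 0) :
    ∃ C > 0, ∀ (l : ℝ), 0 < l → ∀ (h : ℝ), 0 < h → h ≤ 1 →
      ∀ (xi : Ed d), xi ∈ cube d l →
      ∀ (n : ℕ) (x : Fin n → Ed d) (v : Fin n → ℝ),
        (∀ j, x j ∈ cube d l) →
        (∀ j, x j ≠ xi) →
        (∀ j, 0 ≤ v j) →
        (∀ α : Fin d → ℕ, deg α ≤ 2 →
          ∀ β : Fin d → ℕ, deg β = 1 →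
            |∑ j, v j * mpow (x j - xi) α * mpow (gradW d σ h P (xi - x j)) β
              - (if α = β then (1 : ℝ) else 0)| ≤ h ^ 2) →
        ∀ f : Ed d → ℝ, ContDiff ℝ 4 f →
          |2 * ∑ j, v j * (f xi - f (x j)) *
              (⟪xi - x j, gradW d σ h P (xi - x j)⟫ / ‖xi - x j‖ ^ 2)
            - lapl f xi| ≤ C * h ^ 2 * Cnorm 4 f (cube d l) :=
  stmt_4_general d σ hσ P hPsupp hdec
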